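/- arXiv:2302.04114 — 2 statements merged into one kernel-verified Lean document; each statement's English description precedes it below -/
import Mathlib

section
/- The matrix L − (1/n)·J is invertible. -/
open Matrix BigOperators

lemma pow_entry_nonneg {n : ℕ} {P : Matrix (Fin n) (Fin n) ℝ}
    (hP0 : ∀ i j, 0 ≤ P i j) (m : ℕ) : ∀ i j, 0 ≤ (P ^ m) i j := by
  induction m with
  | zero => intro i j; rw [pow_zero, Matrix.one_apply]; split <;> norm_num
  | succ m ih =>
      intro i j
      rw [pow_succ, Matrix.mul_apply]
      exact Finset.sum_nonneg fun k _ => mul_nonneg (ih i k) (hP0 k j)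

lemma pow_row_sum {n : ℕ} {P : Matrix (Fin n) (Fin n) ℝ}
    (hProw : ∀ i, ∑ j, P i j = 1) (m : ℕ) : ∀ i, ∑ j, (P ^ m) i j = 1 := by
  induction m with
  | zero => intro i; simp [pow_zero, Matrix.one_apply, Finset.sum_ite_eq]
  | succ m ih =>
      intro i
      rw [pow_succ]
      simp only [Matrix.mul_apply]
      rw [Finset.sum_comm]
      calc ∑ k, ∑ j, (P ^ m) i k * P k j = ∑ k, (P ^ m) i k * ∑ j, P k j := by
            simp [Finset.mul_sum]
        _ = 1 := by simp [hProw, ih]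

lemma pow_fixed {n : ℕ} {P : Matrix (Fin n) (Fin n) ℝ} {v : Fin n → ℝ}
    (hfix : P *ᵥ v = v) (m : ℕ) : (P ^ m) *ᵥ v = v := by
  induction m with
  | zero => simp
  | succ m ih => rw [pow_succ, ← Matrix.mulVec_mulVec, hfix, ih]

lemma fixed_const {n : ℕ} [NeZero n] {P : Matrix (Fin n) (Fin n) ℝ}
    (hP0 : ∀ i j, 0 ≤ P i j) (hProw : ∀ i, ∑ j, P i j = 1)
    (hPirr : ∀ i j, ∃ m : ℕ, 1 ≤ m ∧ 0 < (P ^ m) i j)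
    {v : Fin n → ℝ} (hfix : P *ᵥ v = v) : ∀ j k, v j = v k := by
  have hne : (Finset.univ : Finset (Fin n)).Nonempty := Finset.univ_nonempty
  obtain ⟨i0, -, hi0⟩ := Finset.exists_max_image Finset.univ v hne
  have key : ∀ j, v j = v i0 := by
    intro j
    obtain ⟨m, -, hm⟩ := hPirr i0 j
    have hfm := congrFun (pow_fixed hfix m) i0
    simp only [Matrix.mulVec, dotProduct] at hfm
    by_contra hne'
    have hlt : v j < v i0 := lt_of_le_of_ne (hi0 j (Finset.mem_univ j)) hne'
    have : ∑ k, (P ^ m) i0 k * v k < ∑ k, (P ^ m) i0 k * v i0 := by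
      apply Finset.sum_lt_sum
      · intro k _
        exact mul_le_mul_of_nonneg_left (hi0 k (Finset.mem_univ k))
          (pow_entry_nonneg hP0 m i0 k)
      · exact ⟨j, Finset.mem_univ j, by
          exact mul_lt_mul_of_pos_left hlt hm⟩
    rw [hfm, ← Finset.sum_mul, pow_row_sum hProw m i0, one_mul] at this
    exact lt_irrefl _ this
  intro j k; rw [key j, key k]

/-- The matrix `L − (1/n) • J` is invertible, where `J = 𝟏𝟏ᵀ`. -/
theorem directed_laplacian_shift_invertible
    {n : ℕ} (hn : 2 ≤ n)
    (P : Matrix (Fin n) (Fin n) ℝ)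
    (hP0 : ∀ i j, 0 ≤ P i j)
    (hProw : ∀ i, ∑ j, P i j = 1)
    (hPirr : ∀ i j, ∃ m : ℕ, 1 ≤ m ∧ 0 < (P ^ m) i j)
    (pv : Fin n → ℝ) (hpv0 : ∀ i, 0 < pv i) (hpvsum : ∑ i, pv i = 1)
    (hstat : pv ᵥ* P = pv)
    (d : ℝ) (hd : 0 < d)
    (L : Matrix (Fin n) (Fin n) ℝ)
    (hL : L = d • (Matrix.diagonal pv * (1 - P)))
    (J : Matrix (Fin n) (Fin n) ℝ)
    (hJ : J = Matrix.of fun _ _ => (1 : ℝ)) :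
    IsUnit (L - (1 / (n : ℝ)) • J) := by
  have : NeZero n := ⟨by omega⟩
  have hn0 : (0:ℝ) < n := by positivity
  rw [Matrix.isUnit_iff_isUnit_det, isUnit_iff_ne_zero]
  intro hdet
  obtain ⟨v, hv0, hv⟩ := (Matrix.exists_mulVec_eq_zero_iff).mpr hdet
  set s := ∑ k, v k with hs
  have hentry : ∀ i, d * (pv i * (v i - (P *ᵥ v) i)) - (1 / n) * s = 0 := by
    intro i
    have := congrFun hv i
    simp only [hL, hJ, Matrix.sub_mulVec, Matrix.smul_mulVec, Pi.sub_apply,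
      Pi.smul_apply, smul_eq_mul] at this
    rw [← Matrix.mulVec_mulVec] at this
    simpa [Matrix.mulVec, dotProduct, Matrix.diagonal_apply, Finset.sum_ite_eq,
      Matrix.sub_mulVec, sub_mul, mul_sub, Matrix.one_apply, ite_mul, ← hs]
      using this
  have hsum0 : s = 0 := by
    have h1 : ∑ i, (d * (pv i * (v i - (P *ᵥ v) i)) - (1 / n) * s) = 0 :=
      Finset.sum_eq_zero fun i _ => hentry i
    have h2 : ∑ i, pv i * (P *ᵥ v) i = ∑ i, pv i * v i := by
      simp only [Matrix.mulVec, dotProduct, Finset.mul_sum, ← mul_assoc]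
      rw [Finset.sum_comm]
      refine Finset.sum_congr rfl fun j _ => ?_
      rw [← Finset.sum_mul]
      have := congrFun hstat j
      simp only [Matrix.vecMul, dotProduct] at this
      rw [this]
    have h3 : ∑ i, (d * (pv i * (v i - (P *ᵥ v) i)) - (1 / n) * s)
        = d * (∑ i, pv i * v i - ∑ i, pv i * (P *ᵥ v) i) - s := by
      rw [Finset.sum_sub_distrib]
      congr 1
      · rw [← Finset.mul_sum, ← Finset.sum_sub_distrib]
        congr 1
        refine Finset.sum_congr rfl fun i _ => ?_
        ring
      · rw [Finset.sum_const, Finset.card_univ, Fintype.card_fin, nsmul_eq_mul]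
        field_simp
    rw [h3, h2, sub_self, mul_zero, zero_sub, neg_eq_zero] at h1
    exact h1
  have hfix : P *ᵥ v = v := by
    funext i
    have h := hentry i
    rw [hsum0, mul_zero, sub_zero] at h
    have h5 : v i - (P *ᵥ v) i = 0 := by
      rcases mul_eq_zero.mp h with h | h
      · exact absurd h (ne_of_gt hd)
      · rcases mul_eq_zero.mp h with h | h
        · exact absurd h (ne_of_gt (hpv0 i))
        · exact h
    linarith [h5]
  have hconst := fixed_const hP0 hProw hPirr hfix
  apply hv0
  funext j
  have hsj : s = n * v j := by
    rw [hs, Finset.sum_congr rfl fun k _ => hconst k j, Finset.sum_const,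
      Finset.card_univ, Fintype.card_fin, nsmul_eq_mul]
  have hvj : v j = 0 := by
    rcases mul_eq_zero.mp (hsj.symm.trans hsum0) with h | h
    · exact absurd h (ne_of_gt hn0)
    · exact h
  simpa using hvj
end

section
/- For any three indices i, j, k with i ≠ k and j ≠ k, the (i,j) entry of the inverse of the principal submatrix L_{\{k}} (entries indexed by the original indices distinct from k) satisfies ((L_{\{k}})⁻¹)_{i,j} = L†_{k,k} + L†_{i,j} − L†_{i,k} − L†_{k,j}. -/
open Matrix BigOperators

lemma myPowNonneg {n : ℕ} (P : Matrix (Fin n) (Fin n) ℝ)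
    (hP0 : ∀ i j, 0 ≤ P i j) : ∀ m i j, 0 ≤ (P ^ m) i j := by
  intro m
  induction m with
  | zero =>
      intro i j
      rw [pow_zero, Matrix.one_apply]
      split <;> norm_num
  | succ m ih =>
      intro i j
      rw [pow_succ, Matrix.mul_apply]
      exact Finset.sum_nonneg fun l _ => mul_nonneg (ih i l) (hP0 l j)

lemma myPowRowSum {n : ℕ} (P : Matrix (Fin n) (Fin n) ℝ)
    (hProw : ∀ i, ∑ j, P i j = 1) : ∀ m i, ∑ j, (P ^ m) i j = 1 := by
  intro m
  induction m with
  | zero => intro i; simp [Matrix.one_apply]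
  | succ m ih =>
      intro i
      simp only [pow_succ, Matrix.mul_apply]
      rw [Finset.sum_comm]
      calc ∑ l, ∑ j, (P ^ m) i l * P l j
          = ∑ l, (P ^ m) i l * ∑ j, P l j := by
            refine Finset.sum_congr rfl fun l _ => ?_
            rw [Finset.mul_sum]
        _ = 1 := by
            simp only [hProw, mul_one]
            exact ih i

lemma myFixedConst {n : ℕ} (hn : 0 < n) (P : Matrix (Fin n) (Fin n) ℝ)
    (hP0 : ∀ i j, 0 ≤ P i j) (hProw : ∀ i, ∑ j, P i j = 1)
    (hPirr : ∀ i j, ∃ m : ℕ, 1 ≤ m ∧ 0 < (P ^ m) i j)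
    (x : Fin n → ℝ) (hx : P *ᵥ x = x) : ∀ a b, x a = x b := by
  have hpow : ∀ m, (P ^ m) *ᵥ x = x := by
    intro m
    induction m with
    | zero => simp
    | succ m ih => rw [pow_succ, ← Matrix.mulVec_mulVec, hx, ih]
  haveI : Nonempty (Fin n) := ⟨⟨0, hn⟩⟩
  obtain ⟨i, -, hi⟩ := Finset.exists_max_image Finset.univ x
    ⟨Classical.arbitrary (Fin n), Finset.mem_univ _⟩
  have key : ∀ j, x j = x i := by
    intro j
    obtain ⟨m, hm1, hmpos⟩ := hPirr i j
    have h1 : ∑ l, (P ^ m) i l * x l = x i := by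
      have := congrFun (hpow m) i
      simpa [Matrix.mulVec, dotProduct] using this
    have h2 : ∑ l, (P ^ m) i l * x i = x i := by
      rw [← Finset.sum_mul, myPowRowSum P hProw m i, one_mul]
    have hsum : ∑ l, (P ^ m) i l * (x i - x l) = 0 := by
      simp only [mul_sub]
      rw [Finset.sum_sub_distrib, h1, h2, sub_self]
    have hterm : ∀ l ∈ Finset.univ, 0 ≤ (P ^ m) i l * (x i - x l) :=
      fun l _ => mul_nonneg (myPowNonneg P hP0 m i l)
        (sub_nonneg.2 (hi l (Finset.mem_univ l)))
    have h0 := (Finset.sum_eq_zero_iff_of_nonneg hterm).1 hsum j (Finset.mem_univ j)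
    rcases mul_eq_zero.1 h0 with h | h
    · exact absurd h (ne_of_gt hmpos)
    · linarith
  intro a b; rw [key a, key b]

lemma myHatPow {n : ℕ} (pv : Fin n → ℝ) (hpv0 : ∀ i, 0 < pv i)
    (P : Matrix (Fin n) (Fin n) ℝ) (m : ℕ) :
    (Matrix.diagonal (fun i => (pv i)⁻¹) * Pᵀ * Matrix.diagonal pv) ^ m
      = Matrix.diagonal (fun i => (pv i)⁻¹) * (Pᵀ) ^ m * Matrix.diagonal pv := by
  have hDD : Matrix.diagonal pv * Matrix.diagonal (fun i => (pv i)⁻¹) = 1 := by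
    rw [Matrix.diagonal_mul_diagonal]
    convert Matrix.diagonal_one using 1
    exact congrArg Matrix.diagonal <| funext fun i => mul_inv_cancel₀ (ne_of_gt (hpv0 i))
  have hDD' : Matrix.diagonal (fun i => (pv i)⁻¹) * Matrix.diagonal pv = 1 := by
    rw [Matrix.diagonal_mul_diagonal]
    convert Matrix.diagonal_one using 1
    exact congrArg Matrix.diagonal <| funext fun i => inv_mul_cancel₀ (ne_of_gt (hpv0 i))
  induction m with
  | zero => rw [pow_zero, pow_zero, mul_one, hDD']
  | succ m ih =>
      rw [pow_succ, pow_succ, ih]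
      simp only [Matrix.mul_assoc]
      rw [← Matrix.mul_assoc (Matrix.diagonal pv) (Matrix.diagonal fun i => (pv i)⁻¹), hDD,
        Matrix.one_mul]

/-- For any indices `i, j, k` with `i ≠ k` and `j ≠ k`,
`((L_{\{k}})⁻¹)_{i,j} = L†_{k,k} + L†_{i,j} − L†_{i,k} − L†_{k,j}`. -/
theorem directed_laplacian_submatrix_inverse_entry
    {n : ℕ} (hn : 2 ≤ n)
    (P : Matrix (Fin n) (Fin n) ℝ)
    (hP0 : ∀ i j, 0 ≤ P i j)
    (hProw : ∀ i, ∑ j, P i j = 1)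
    (hPirr : ∀ i j, ∃ m : ℕ, 1 ≤ m ∧ 0 < (P ^ m) i j)
    (pv : Fin n → ℝ) (hpv0 : ∀ i, 0 < pv i) (hpvsum : ∑ i, pv i = 1)
    (hstat : pv ᵥ* P = pv)
    (d : ℝ) (hd : 0 < d)
    (L : Matrix (Fin n) (Fin n) ℝ)
    (hL : L = d • (Matrix.diagonal pv * (1 - P)))
    (M : Matrix (Fin n) (Fin n) ℝ)
    (hM1 : L * M * L = L) (hM2 : M * L * M = M)
    (hM3 : (L * M)ᵀ = L * M) (hM4 : (M * L)ᵀ = M * L)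
    (i j k : Fin n) (hik : i ≠ k) (hjk : j ≠ k)
    (Lk : Matrix {i : Fin n // i ≠ k} {i : Fin n // i ≠ k} ℝ)
    (hLk : Lk = L.submatrix Subtype.val Subtype.val) :
    Lk⁻¹ ⟨i, hik⟩ ⟨j, hjk⟩ = M k k + M i j - M i k - M k j := by
  have hn0 : 0 < n := by omega
  have hnR : (n : ℝ) ≠ 0 := Nat.cast_ne_zero.2 (by omega)
  -- entrywise formula for L
  have hLe : ∀ a b, L a b = d * (pv a * ((if a = b then (1:ℝ) else 0) - P a b)) := by
    intro a b
    rw [hL]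
    simp [Matrix.sub_apply, Matrix.one_apply]
  -- row sums of L vanish
  have hLrow : ∀ a, ∑ b, L a b = 0 := by
    intro a
    have h : ∑ b, L a b = d * (pv a * ∑ b, ((if a = b then (1:ℝ) else 0) - P a b)) := by
      rw [Finset.mul_sum, Finset.mul_sum]
      exact Finset.sum_congr rfl fun b _ => hLe a b
    rw [h, Finset.sum_sub_distrib]
    simp [hProw a]
  -- column sums of L vanish
  have hstat' : ∀ b, ∑ a, pv a * P a b = pv b := by
    intro b
    have := congrFun hstat b
    simpa [Matrix.vecMul, dotProduct] using this
  have hLcol : ∀ b, ∑ a, L a b = 0 := by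
    intro b
    calc ∑ a, L a b
        = ∑ a, (d * (pv a * (if a = b then (1:ℝ) else 0)) - d * (pv a * P a b)) := by
          refine Finset.sum_congr rfl fun a _ => ?_
          rw [hLe]; ring
      _ = 0 := by
          rw [Finset.sum_sub_distrib]
          have h1 : ∑ a, d * (pv a * (if a = b then (1:ℝ) else 0)) = d * pv b := by
            simp [mul_ite, Finset.sum_ite_eq']
          have h2 : ∑ a, d * (pv a * P a b) = d * pv b := by
            rw [← Finset.mul_sum]
            rw [show (∑ a, pv a * P a b) = pv b from hstat' b]
          rw [h1, h2, sub_self]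
  -- the left kernel of L consists of constant vectors
  have hlker : ∀ x : Fin n → ℝ, (∀ b, ∑ a, x a * L a b = 0) → ∀ a b, x a = x b := by
    intro x hx
    have hz : ∀ b, ∑ a, (x a * pv a) * P a b = x b * pv b := by
      intro b
      have hexp : ∑ a, x a * L a b
          = d * ((x b * pv b) - ∑ a, (x a * pv a) * P a b) := by
        have hA : ∑ a, d * (x a * pv a * (if a = b then (1:ℝ) else 0)) = d * (x b * pv b) := by
          simp [mul_ite, Finset.sum_ite_eq']
        calc ∑ a, x a * L a b
            = ∑ a, (d * (x a * pv a * (if a = b then (1:ℝ) else 0)) - d * (x a * pv a * P a b)) := by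
              refine Finset.sum_congr rfl fun a _ => ?_
              rw [hLe]; ring
          _ = d * (x b * pv b) - ∑ a, d * (x a * pv a * P a b) := by
              rw [Finset.sum_sub_distrib, hA]
          _ = _ := by
              rw [mul_sub, Finset.mul_sum]
      have h0 := hx b
      rw [hexp] at h0
      have := mul_eq_zero.1 h0
      rcases this with h | h
      · exact absurd h (ne_of_gt hd)
      · linarith
    -- the reversed chain
    set Ph : Matrix (Fin n) (Fin n) ℝ :=
      Matrix.diagonal (fun i => (pv i)⁻¹) * Pᵀ * Matrix.diagonal pv with hPh
    have hPhe : ∀ a b, Ph a b = (pv a)⁻¹ * P b a * pv b := by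
      intro a b
      rw [hPh]
      simp [Matrix.mul_assoc]
    have hPh0 : ∀ a b, 0 ≤ Ph a b := by
      intro a b
      rw [hPhe]
      exact mul_nonneg (mul_nonneg (inv_nonneg.2 (hpv0 a).le) (hP0 b a)) (hpv0 b).le
    have hPhrow : ∀ a, ∑ b, Ph a b = 1 := by
      intro a
      calc ∑ b, Ph a b = (pv a)⁻¹ * ∑ b, pv b * P b a := by
            rw [Finset.mul_sum]
            exact Finset.sum_congr rfl fun b _ => by rw [hPhe]; ring
        _ = 1 := by rw [hstat' a, inv_mul_cancel₀ (ne_of_gt (hpv0 a))]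
    have hPhirr : ∀ a b, ∃ m : ℕ, 1 ≤ m ∧ 0 < (Ph ^ m) a b := by
      intro a b
      obtain ⟨m, hm1, hmpos⟩ := hPirr b a
      refine ⟨m, hm1, ?_⟩
      rw [hPh, myHatPow pv hpv0 P m]
      have : (Matrix.diagonal (fun i => (pv i)⁻¹) * Pᵀ ^ m * Matrix.diagonal pv) a b
          = (pv a)⁻¹ * (P ^ m) b a * pv b := by
        rw [← Matrix.transpose_pow]
        simp only [Matrix.mul_diagonal, Matrix.diagonal_mul, Matrix.transpose_apply]
      rw [this]
      exact mul_pos (mul_pos (inv_pos.2 (hpv0 a)) hmpos) (hpv0 b)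
    have hfix : Ph *ᵥ x = x := by
      funext a
      calc (Ph *ᵥ x) a = (pv a)⁻¹ * ∑ c, (x c * pv c) * P c a := by
            rw [Matrix.mulVec, dotProduct, Finset.mul_sum]
            exact Finset.sum_congr rfl fun c _ => by rw [hPhe]; ring
        _ = x a := by
            rw [hz a, mul_comm, mul_assoc, mul_inv_cancel₀ (ne_of_gt (hpv0 a)), mul_one]
    exact myFixedConst hn0 Ph hPh0 hPhrow hPhirr x hfix
  -- the key identity  Lᵀ (L M) = Lᵀ
  have hTQ : Lᵀ * (L * M) = Lᵀ := by
    have h := congrArg Matrix.transpose hM1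
    rw [Matrix.transpose_mul, hM3] at h
    exact h
  -- entries of L M
  have hQ : ∀ a b, (L * M) a b = (if a = b then (1:ℝ) else 0) - (n:ℝ)⁻¹ := by
    intro a j'
    set v : Fin n → ℝ := fun c => (L * M) c j' - (if c = j' then 1 else 0) with hv
    have hvl : ∀ b, ∑ c, v c * L c b = 0 := by
      intro b
      have h1 : ∑ c, (L * M) c j' * L c b = L j' b := by
        have h := congrFun (congrFun hTQ b) j'
        simp only [Matrix.mul_apply, Matrix.transpose_apply] at h
        rw [← h]
        exact Finset.sum_congr rfl fun c _ => mul_comm _ _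
      have h2 : ∑ c, (if c = j' then (1:ℝ) else 0) * L c b = L j' b := by simp
      simp only [hv, sub_mul]
      rw [Finset.sum_sub_distrib, h1, h2, sub_self]
    have hvc := hlker v hvl
    have hLM : ∑ c, (L * M) c j' = 0 := by
      simp only [Matrix.mul_apply]
      rw [Finset.sum_comm]
      calc ∑ e, ∑ c, L c e * M e j'
          = ∑ e, (∑ c, L c e) * M e j' := by
            exact Finset.sum_congr rfl fun e _ => (Finset.sum_mul _ _ _).symm
        _ = 0 := by simp [hLcol]
    have hsv : ∑ c, v c = -1 := by
      simp only [hv]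
      rw [Finset.sum_sub_distrib, hLM]
      simp
    have hnv : (n : ℝ) * v a = -1 := by
      rw [← hsv]
      rw [Finset.sum_congr rfl fun c _ => (hvc c a : v c = v a)]
      simp [Finset.card_univ, mul_comm]
    have hva : v a = -(n:ℝ)⁻¹ := by
      field_simp at hnv ⊢
      linarith
    have hv2 : (L * M) a j' - (if a = j' then (1:ℝ) else 0) = -(n:ℝ)⁻¹ := hva
    linarith [hv2]
  -- the candidate inverse
  set N : Matrix {i : Fin n // i ≠ k} {i : Fin n // i ≠ k} ℝ :=
    Matrix.of (fun a b => M k k + M a.val b.val - M a.val k - M k b.val) with hN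
  have hsub : ∀ (f : Fin n → ℝ), f k = 0 →
      ∑ c : {i : Fin n // i ≠ k}, f c.val = ∑ c, f c := by
    intro f hf
    rw [← Finset.sum_subtype ({k}ᶜ : Finset (Fin n)) (fun x => by simp) f]
    rw [← Finset.sum_compl_add_sum ({k} : Finset (Fin n)) f]
    simp [hf]
  have hright : Lk * N = 1 := by
    ext a b
    rw [hLk, Matrix.mul_apply, Matrix.one_apply]
    have hstep : ∑ c : {i : Fin n // i ≠ k},
        L.submatrix Subtype.val Subtype.val a c * N c b
        = ∑ c, L a.val c * (M k k + M c b.val - M c k - M k b.val) := by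
      refine hsub (fun c => L a.val c * (M k k + M c b.val - M c k - M k b.val)) ?_
      simp
    rw [hstep]
    have e1 : ∑ c, L a.val c * M k k = 0 := by
      rw [← Finset.sum_mul, hLrow, zero_mul]
    have e4 : ∑ c, L a.val c * M k b.val = 0 := by
      rw [← Finset.sum_mul, hLrow, zero_mul]
    have e2 : ∑ c, L a.val c * M c b.val = (if a.val = b.val then (1:ℝ) else 0) - (n:ℝ)⁻¹ := by
      rw [← Matrix.mul_apply]
      exact hQ _ _
    have e3 : ∑ c, L a.val c * M c k = -(n:ℝ)⁻¹ := by
      rw [← Matrix.mul_apply, hQ]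
      simp [a.prop]
    calc ∑ c, L a.val c * (M k k + M c b.val - M c k - M k b.val)
        = (∑ c, L a.val c * M k k) + (∑ c, L a.val c * M c b.val)
          - (∑ c, L a.val c * M c k) - (∑ c, L a.val c * M k b.val) := by
          rw [← Finset.sum_add_distrib, ← Finset.sum_sub_distrib, ← Finset.sum_sub_distrib]
          exact Finset.sum_congr rfl fun c _ => by ring
      _ = if a = b then 1 else 0 := by
          rw [e1, e2, e3, e4]
          have : (a = b) ↔ (a.val = b.val) := Subtype.ext_iff
          by_cases h : a = b
          · simp [h, this.1 h]
          · have h' : ¬ (a.val = b.val) := fun hv => h (Subtype.ext hv)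
            simp [h, h']
  have hLkinv : Lk⁻¹ = N := Matrix.inv_eq_right_inv hright
  rw [hLkinv, hN]
  simp [Matrix.of_apply]
end
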